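/- arXiv:2502.01512 — 2 statements merged into one kernel-verified Lean document; each statement's English description precedes it below -/
import Mathlib

section
/- For a diagonal matrix u = diag(λ₁,…,λ_d), the directional derivative of the matrix exponential in direction h (symmetric) has (i,j) entry equal to (e^{λ_i} − e^{λ_j})/(λ_i − λ_j) · h_{ij} when λ_i ≠ λ_j, and e^{λ_i} h_{ij} when λ_i = λ_j (Daletskii–Krein formula, diagonal case). -/
/-!
Differentiate the exponential series term by term. The derivative of `t ↦ (u + t • h) ^ n` is
`∑ i < n, (u + t • h) ^ (n - 1 - i) * h * (u + t • h) ^ i`, and for `|t| < 1` these derivatives,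
divided by `n!`, are dominated by the summable `‖h‖ n R ^ (n - 1) / n!` with `R = ‖u‖ + ‖h‖`.
For `u = diagonal λ` the `(i, j)` entry of the derivative series is
`h i j * ∑ n, (1 / n!) ∑ k < n, λ i ^ (n - 1 - k) * λ j ^ k`, the divided difference of `exp`:
multiplied by `λ i - λ j` it telescopes to `exp (λ i) - exp (λ j)`, and for `λ i = λ j` it is the
series `∑ n λ ^ (n - 1) / n!` of `exp' = exp`.
-/

open Finset
open scoped Nat

section NormedRing

variable {𝔸 : Type*} [NormedRing 𝔸]

-- Not `norm_pow_le`: no `NormOneClass`, the Frobenius norm of `1 : Matrix (Fin d) (Fin d) ℝ` is `√d`.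
theorem norm_pow_mul_le (x y : 𝔸) (k : ℕ) : ‖x ^ k * y‖ ≤ ‖x‖ ^ k * ‖y‖ := by
  induction k with
  | zero => simp
  | succ k ih =>
    calc ‖x ^ (k + 1) * y‖ = ‖x * (x ^ k * y)‖ := by rw [pow_succ', mul_assoc]
      _ ≤ ‖x‖ * (‖x‖ ^ k * ‖y‖) := norm_mul_le_of_le le_rfl ih
      _ = ‖x‖ ^ (k + 1) * ‖y‖ := by ring

theorem norm_mul_pow_le (x y : 𝔸) (k : ℕ) : ‖y * x ^ k‖ ≤ ‖y‖ * ‖x‖ ^ k := by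
  induction k with
  | zero => simp
  | succ k ih =>
    calc ‖y * x ^ (k + 1)‖ = ‖y * x ^ k * x‖ := by rw [pow_succ, mul_assoc]
      _ ≤ ‖y‖ * ‖x‖ ^ k * ‖x‖ := norm_mul_le_of_le ih le_rfl
      _ = ‖y‖ * ‖x‖ ^ (k + 1) := by ring

theorem norm_sum_pow_mul_mul_pow_le (x h : 𝔸) (n : ℕ) :
    ‖∑ i ∈ range n, x ^ (n.pred - i) * h * x ^ i‖ ≤ n * (‖h‖ * ‖x‖ ^ (n - 1)) := by
  have hterm : ∀ i ∈ range n, ‖x ^ (n.pred - i) * h * x ^ i‖ ≤ ‖h‖ * ‖x‖ ^ (n - 1) := by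
    intro i hi
    have hle : i ≤ n - 1 := Nat.le_pred_of_lt (mem_range.1 hi)
    calc ‖x ^ (n.pred - i) * h * x ^ i‖ ≤ ‖x‖ ^ (n.pred - i) * ‖h‖ * ‖x‖ ^ i :=
          (norm_mul_pow_le _ _ _).trans <| by gcongr; exact norm_pow_mul_le _ _ _
      _ = ‖h‖ * ‖x‖ ^ (n - 1) := by
          rw [Nat.pred_eq_sub_one, mul_right_comm, ← pow_add, Nat.sub_add_cancel hle, mul_comm]
  simpa using norm_sum_le_of_le (range n) hterm

end NormedRing

theorem Real.hasSum_inv_factorial_mul_nat_mul_pow_pred (x : ℝ) :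
    HasSum (fun n : ℕ => (n ! : ℝ)⁻¹ * (n * x ^ (n - 1))) (Real.exp x) := by
  rw [Real.exp_eq_exp_ℝ, ← hasSum_nat_add_iff' 1]
  simp only [range_one, sum_singleton, CharP.cast_eq_zero, zero_mul, mul_zero, sub_zero]
  refine (NormedSpace.expSeries_div_hasSum_exp x).congr_fun fun n => ?_
  rw [Nat.factorial_succ]
  push_cast
  field_simp

theorem sum_pow_mul_pow_mul_sub {R : Type*} [CommRing R] (a b : R) (n : ℕ) :
    (∑ i ∈ range n, a ^ (n.pred - i) * b ^ i) * (a - b) = a ^ n - b ^ n := by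
  have h := geom_sum₂_mul b a n
  simp only [Nat.pred_eq_sub_one, mul_comm (a ^ _)]
  linear_combination (-1 : R) * h

theorem Real.hasSum_inv_factorial_mul_sum_pow_mul_pow (a b : ℝ) :
    HasSum (fun n : ℕ => (n ! : ℝ)⁻¹ * ∑ i ∈ range n, a ^ (n.pred - i) * b ^ i)
      (if a = b then Real.exp a else (Real.exp a - Real.exp b) / (a - b)) := by
  split_ifs with hab
  · subst hab
    refine (Real.hasSum_inv_factorial_mul_nat_mul_pow_pred a).congr_fun fun n => ?_
    rw [sum_congr rfl fun i hi => ?_, sum_const, card_range, nsmul_eq_mul]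
    rw [← pow_add, Nat.sub_add_cancel (Nat.le_pred_of_lt (mem_range.1 hi)), Nat.pred_eq_sub_one]
  · rw [Real.exp_eq_exp_ℝ]
    refine (((NormedSpace.expSeries_div_hasSum_exp a).sub
      (NormedSpace.expSeries_div_hasSum_exp b)).div_const (a - b)).congr_fun fun n => ?_
    rw [eq_div_iff (sub_ne_zero.2 hab), mul_assoc, sum_pow_mul_pow_mul_sub]
    ring

theorem Matrix.diagonal_pow_mul_mul_diagonal_pow_apply {n R : Type*} [Fintype n] [DecidableEq n]
    [Semiring R] (d : n → R) (h : Matrix n n R) (a b : ℕ) (i j : n) :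
    (diagonal d ^ a * h * diagonal d ^ b) i j = d i ^ a * h i j * d j ^ b := by
  simp [diagonal_pow, diagonal_mul, mul_diagonal]

section BanachAlgebra

variable {𝔸 : Type*} [NormedRing 𝔸] [NormedAlgebra ℝ 𝔸] [CompleteSpace 𝔸]

theorem hasDerivAt_exp_add_smul (u h : 𝔸) :
    HasDerivAt (fun t : ℝ => NormedSpace.exp (u + t • h))
      (∑' n, (n ! : ℝ)⁻¹ • ∑ i ∈ range n, u ^ (n.pred - i) * h * u ^ i) 0 := by
  set R := ‖u‖ + ‖h‖
  have hnorm : ∀ t ∈ Metric.ball (0 : ℝ) 1, ‖u + t • h‖ ≤ R := by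
    intro t ht
    rw [mem_ball_zero_iff, Real.norm_eq_abs] at ht
    calc ‖u + t • h‖ ≤ ‖u‖ + ‖t • h‖ := norm_add_le _ _
      _ = ‖u‖ + |t| * ‖h‖ := by rw [norm_smul, Real.norm_eq_abs]
      _ ≤ ‖u‖ + 1 * ‖h‖ := by gcongr
      _ = R := by rw [one_mul]
  have hderiv : ∀ (n : ℕ) (t : ℝ), HasDerivAt (fun s : ℝ => (n ! : ℝ)⁻¹ • (u + s • h) ^ n)
      ((n ! : ℝ)⁻¹ • ∑ i ∈ range n, (u + t • h) ^ (n.pred - i) * h * (u + t • h) ^ i) t := by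
    intro n t
    have hline : HasDerivAt (fun s : ℝ => u + s • h) h t := by
      simpa using ((hasDerivAt_id t).smul_const h).const_add u
    exact (hline.fun_pow' n).fun_const_smul _
  have hbound : ∀ (n : ℕ), ∀ t ∈ Metric.ball (0 : ℝ) 1,
      ‖(n ! : ℝ)⁻¹ • ∑ i ∈ range n, (u + t • h) ^ (n.pred - i) * h * (u + t • h) ^ i‖
        ≤ ‖h‖ * ((n ! : ℝ)⁻¹ * (n * R ^ (n - 1))) := by
    intro n t ht
    rw [norm_smul, norm_inv, Real.norm_natCast]
    calc _ ≤ (n ! : ℝ)⁻¹ * (n * (‖h‖ * R ^ (n - 1))) := by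
          gcongr
          exact (norm_sum_pow_mul_mul_pow_le _ _ _).trans (by gcongr; exact hnorm t ht)
      _ = _ := by ring
  have hsummable0 : Summable fun n => (n ! : ℝ)⁻¹ • (u + (0 : ℝ) • h) ^ n := by
    simpa using NormedSpace.expSeries_summable' (𝕂 := ℝ) u
  have key := hasDerivAt_tsum_of_isPreconnected
    ((Real.hasSum_inv_factorial_mul_nat_mul_pow_pred R).summable.mul_left ‖h‖)
    Metric.isOpen_ball (convex_ball (0 : ℝ) 1).isPreconnected (fun n t _ => hderiv n t) hbound
    (Metric.mem_ball_self one_pos) hsummable0 (Metric.mem_ball_self one_pos)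
  simpa [NormedSpace.exp_eq_tsum ℝ] using key

end BanachAlgebra

attribute [local instance] Matrix.frobeniusNormedRing Matrix.frobeniusNormedAlgebra

theorem daletskii_krein_diagonal_general (d : ℕ) (lam : Fin d → ℝ)
    (h : Matrix (Fin d) (Fin d) ℝ) :
    HasDerivAt (fun t : ℝ => NormedSpace.exp (Matrix.diagonal lam + t • h))
      (Matrix.of fun i j =>
        if lam i = lam j then Real.exp (lam i) * h i j
        else ((Real.exp (lam i) - Real.exp (lam j)) / (lam i - lam j)) * h i j) 0 := by
  refine (hasDerivAt_exp_add_smul (Matrix.diagonal lam) h).congr_deriv (HasSum.tsum_eq ?_)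
  refine Pi.hasSum.2 fun i => Pi.hasSum.2 fun j => ?_
  rw [Matrix.of_apply, ← ite_mul]
  refine ((Real.hasSum_inv_factorial_mul_sum_pow_mul_pow (lam i) (lam j)).mul_right
    (h i j)).congr_fun fun n => ?_
  simp only [Matrix.smul_apply, Matrix.sum_apply, Matrix.diagonal_pow_mul_mul_diagonal_pow_apply,
    smul_eq_mul]
  rw [mul_assoc, sum_mul]
  exact congrArg _ (sum_congr rfl fun _ _ => mul_right_comm _ _ _)

/-- Daletskii–Krein formula, diagonal case: for u = diag(λ₁,…,λ_d) and h symmetric,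
the directional derivative of the matrix exponential at u in direction h has (i,j)
entry (e^{λ_i} − e^{λ_j})/(λ_i − λ_j) · h_{ij} when λ_i ≠ λ_j and e^{λ_i} h_{ij}
when λ_i = λ_j. -/
theorem daletskii_krein_diagonal (d : ℕ) (lam : Fin d → ℝ)
    (h : Matrix (Fin d) (Fin d) ℝ) (hh : h.IsSymm) :
    HasDerivAt (fun t : ℝ => NormedSpace.exp (Matrix.diagonal lam + t • h))
      (Matrix.of fun i j =>
        if lam i = lam j then Real.exp (lam i) * h i j
        else ((Real.exp (lam i) - Real.exp (lam j)) / (lam i - lam j)) * h i j) 0 :=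
  daletskii_krein_diagonal_general d lam h
end

section
/- For p ∈ P_d, x ∈ P_d and t ∈ ℝ, the vectorized logarithm satisfies Vect_{e^t p}(Log_{e^t p}(x)) = Vect_p(Log_p(x)) − t ν, where ν = Vect_p(p) = (1,…,1,0,…,0) with d ones followed by zeros. -/
/-!
Write `s = p^{1/2}`. The conjugations by `s` in `Log_p` and `Vect_p` cancel, so
`Vect_p (Log_p x) = Vect_I (log (s⁻¹ x s⁻¹))`. Since `(e^t p)^{1/2} = e^{t/2} s`, replacing `p` by
`e^t p` replaces `s⁻¹ x s⁻¹` by `e^{-t} s⁻¹ x s⁻¹`, and the scalar splits off the logarithm: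
`log (e^{-t} M) = log M - t I`. Finally `Vect_I I = ν`.
-/

open Matrix

/-- Matrix logarithm via spectral decomposition (junk value 0 off Hermitian matrices). -/
noncomputable def mlog {d : ℕ} (A : Matrix (Fin d) (Fin d) ℝ) : Matrix (Fin d) (Fin d) ℝ :=
  if h : A.IsHermitian then
    (h.eigenvectorUnitary : Matrix (Fin d) (Fin d) ℝ) *
      Matrix.diagonal (Real.log ∘ h.eigenvalues) *
      star (h.eigenvectorUnitary : Matrix (Fin d) (Fin d) ℝ)
  else 0

/-- The positive semidefinite square root (Mathlib's former `Matrix.PosSemidef.sqrt`, restored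
verbatim since it was removed from Mathlib). -/
noncomputable def Matrix.PosSemidef.sqrt {n 𝕜 : Type*} [Fintype n] [DecidableEq n] [RCLike 𝕜]
    [PartialOrder 𝕜] {A : Matrix n n 𝕜} (hA : A.PosSemidef) : Matrix n n 𝕜 :=
  hA.1.eigenvectorUnitary.1 * diagonal ((↑) ∘ (√·) ∘ hA.1.eigenvalues) *
  (star hA.1.eigenvectorUnitary : Matrix n n 𝕜)

/-- The Riemannian logarithm map Log_p(x) = p^{1/2} log(p^{-1/2} x p^{-1/2}) p^{1/2}. -/
noncomputable def LogM {d : ℕ} (p : Matrix (Fin d) (Fin d) ℝ) (hp : p.PosDef)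
    (x : Matrix (Fin d) (Fin d) ℝ) : Matrix (Fin d) (Fin d) ℝ :=
  hp.posSemidef.sqrt * mlog (hp.posSemidef.sqrt⁻¹ * x * hp.posSemidef.sqrt⁻¹) *
    hp.posSemidef.sqrt

/-- Index type of size d(d+1)/2 : pairs (i,j) with i ≤ j. -/
abbrev Idx (d : ℕ) := {q : Fin d × Fin d // q.1 ≤ q.2}

/-- Vectorization at the identity. -/
noncomputable def VectI {d : ℕ} (u : Matrix (Fin d) (Fin d) ℝ) : Idx d → ℝ :=
  fun q => if q.1.1 = q.1.2 then u q.1.1 q.1.2 else Real.sqrt 2 * u q.1.1 q.1.2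

/-- Vectorization at p. -/
noncomputable def VectP {d : ℕ} (p : Matrix (Fin d) (Fin d) ℝ) (hp : p.PosDef)
    (u : Matrix (Fin d) (Fin d) ℝ) : Idx d → ℝ :=
  VectI (hp.posSemidef.sqrt⁻¹ * u * hp.posSemidef.sqrt⁻¹)

open scoped MatrixOrder

namespace Matrix

variable {n : Type*} [Fintype n] [DecidableEq n] {A : Matrix n n ℝ}

lemma PosSemidef.sqrt_eq_cfcSqrt (hA : A.PosSemidef) : hA.sqrt = CFC.sqrt A := by
  rw [CFC.sqrt_eq_cfc, cfc_nnreal_eq_real _ A, hA.1.cfc_eq, IsHermitian.cfc, PosSemidef.sqrt]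
  congr 3
  ext i
  simp [hA.eigenvalues_nonneg i]

lemma PosSemidef.sqrt_mul_self (hA : A.PosSemidef) : hA.sqrt * hA.sqrt = A := by
  rw [hA.sqrt_eq_cfcSqrt]
  exact CFC.sqrt_mul_sqrt_self A hA.nonneg

lemma PosSemidef.isHermitian_sqrt (hA : A.PosSemidef) : hA.sqrt.IsHermitian := by
  rw [hA.sqrt_eq_cfcSqrt]
  exact (CFC.sqrt_nonneg A).isSelfAdjoint

lemma PosSemidef.sqrt_smul (hA : A.PosSemidef) {c : ℝ} (hc : 0 ≤ c) (hcA : (c • A).PosSemidef) :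
    hcA.sqrt = √c • hA.sqrt := by
  rw [hcA.sqrt_eq_cfcSqrt, hA.sqrt_eq_cfcSqrt, CFC.sqrt_eq_iff _ _ hcA.nonneg
    (smul_nonneg (Real.sqrt_nonneg c) (CFC.sqrt_nonneg A)), smul_mul_smul_comm,
    Real.mul_self_sqrt hc, CFC.sqrt_mul_sqrt_self A hA.nonneg]

lemma PosDef.isUnit_sqrt (hA : A.PosDef) : IsUnit hA.posSemidef.sqrt :=
  isUnit_of_mul_isUnit_left (hA.posSemidef.sqrt_mul_self ▸ hA.isUnit)

lemma PosDef.posDef_sqrt_inv_mul_mul_sqrt_inv (hA : A.PosDef) {x : Matrix n n ℝ} (hx : x.PosDef) :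
    (hA.posSemidef.sqrt⁻¹ * x * hA.posSemidef.sqrt⁻¹).PosDef := by
  have h := (isUnit_nonsing_inv_iff.mpr hA.isUnit_sqrt).posDef_star_right_conjugate_iff.mpr hx
  rwa [star_eq_conjTranspose, hA.posSemidef.isHermitian_sqrt.inv.eq] at h

end Matrix

section

variable {d : ℕ}

lemma mlog_eq_cfc {A : Matrix (Fin d) (Fin d) ℝ} (hA : A.IsHermitian) :
    mlog A = cfc Real.log A := by
  rw [hA.cfc_eq, IsHermitian.cfc, mlog, dif_pos hA]
  simp [Function.comp_def]

-- `CFC.log` needs a normed ring; any norm will do, since `CFC.log = cfc Real.log`.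
open scoped Matrix.Norms.L2Operator in
lemma mlog_smul {M : Matrix (Fin d) (Fin d) ℝ} (hM : M.PosDef) {c : ℝ} (hc : 0 < c) :
    mlog (c • M) = Real.log c • 1 + mlog M := by
  rw [mlog_eq_cfc ((hM.posSemidef.smul hc.le).isHermitian), mlog_eq_cfc hM.1,
    ← Algebra.algebraMap_eq_smul_one]
  exact CFC.log_smul' M hc hM.isStrictlyPositive

lemma vectI_add (u v : Matrix (Fin d) (Fin d) ℝ) : VectI (u + v) = VectI u + VectI v := by
  ext q
  simp only [VectI, Matrix.add_apply, Pi.add_apply]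
  split_ifs <;> ring

lemma vectI_smul (a : ℝ) (u : Matrix (Fin d) (Fin d) ℝ) : VectI (a • u) = a • VectI u := by
  ext q
  simp only [VectI, Matrix.smul_apply, Pi.smul_apply, smul_eq_mul]
  split_ifs <;> ring

lemma vectI_one (q : Idx d) :
    VectI (1 : Matrix (Fin d) (Fin d) ℝ) q = if q.1.1 = q.1.2 then 1 else 0 := by
  by_cases h : q.1.1 = q.1.2 <;> simp [VectI, one_apply, h]

lemma vectP_logM {p : Matrix (Fin d) (Fin d) ℝ} (hp : p.PosDef) (x : Matrix (Fin d) (Fin d) ℝ) :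
    VectP p hp (LogM p hp x) =
      VectI (mlog (hp.posSemidef.sqrt⁻¹ * x * hp.posSemidef.sqrt⁻¹)) := by
  have hs_det := (isUnit_iff_isUnit_det _).mp hp.isUnit_sqrt
  rw [VectP, LogM, ← mul_assoc, nonsing_inv_mul_cancel_left _ _ hs_det,
    mul_nonsing_inv_cancel_right _ _ hs_det]

lemma vectP_logM_smul {p x : Matrix (Fin d) (Fin d) ℝ} (hp : p.PosDef) (hx : x.PosDef) {c : ℝ}
    (hc : 0 < c) (hcp : (c • p).PosDef) :
    VectP (c • p) hcp (LogM (c • p) hcp x) = VectP p hp (LogM p hp x) - Real.log c • VectI 1 := by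
  set s := hp.posSemidef.sqrt
  have hs_det := (isUnit_iff_isUnit_det _).mp hp.isUnit_sqrt
  have hsqrt_inv : hcp.posSemidef.sqrt⁻¹ = (√c)⁻¹ • s⁻¹ := by
    rw [hp.posSemidef.sqrt_smul hc.le]
    exact inv_smul' s (Units.mk0 √c (Real.sqrt_pos.2 hc).ne') hs_det
  have hconj : hcp.posSemidef.sqrt⁻¹ * x * hcp.posSemidef.sqrt⁻¹ = c⁻¹ • (s⁻¹ * x * s⁻¹) := by
    simp only [hsqrt_inv, smul_mul_assoc, mul_smul_comm, smul_smul]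
    rw [← mul_inv, Real.mul_self_sqrt hc.le]
  rw [vectP_logM, vectP_logM, hconj,
    mlog_smul (hp.posDef_sqrt_inv_mul_mul_sqrt_inv hx) (inv_pos.2 hc), Real.log_inv, vectI_add,
    vectI_smul, neg_smul, add_comm, ← sub_eq_add_neg]

end

/-- Vect_{e^t p}(Log_{e^t p}(x)) = Vect_p(Log_p(x)) − t ν, where ν = Vect_p(p) has
entry 1 on each diagonal index (i,i) and 0 on the off-diagonal indices. -/
theorem vectP_logM_scaled_base (d : ℕ) (p x : Matrix (Fin d) (Fin d) ℝ)
    (hp : p.PosDef) (hx : x.PosDef) (t : ℝ) (hp' : (Real.exp t • p).PosDef) :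
    ∀ q : Idx d,
      VectP (Real.exp t • p) hp' (LogM (Real.exp t • p) hp' x) q =
        VectP p hp (LogM p hp x) q - t * (if q.1.1 = q.1.2 then 1 else 0) := by
  intro q
  rw [vectP_logM_smul hp hx (Real.exp_pos t) hp', Real.log_exp, Pi.sub_apply, Pi.smul_apply,
    vectI_one, smul_eq_mul]
end
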